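/- For every n ≥ 1, E_per(K_n) ≥ n · D_n^{1/n}, where D_n is the number of derangements of {1, …, n}. -/

import Mathlib

/-! As with the characteristic polynomial, `per(x·I − A)` is monic of degree `n` for every `A`:
a permutation `σ ≠ 1` fixes at most `n − 2` points, and only fixed points contribute a factor
`x`. Its constant term is `per(−A)`, which for `A = A(K_n)` is `(−1)ⁿ D_n`. Over `ℂ` the
polynomial splits, so its `n` roots have moduli with product `D_n`, and AM–GM bounds their sum
below by `n · D_n^{1/n}`. -/

open Polynomial Matrix

/-- The permanental polynomial `per(x·I − A)` of a square matrix `A`. -/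
noncomputable def permPoly {n : ℕ} {R : Type*} [CommRing R] (A : Matrix (Fin n) (Fin n) R) :
    Polynomial R :=
  ((Polynomial.X : R[X]) • (1 : Matrix (Fin n) (Fin n) R[X]) - A.map Polynomial.C).permanent

/-- The permanental polynomial `π(G,x) = per(x·I − A(G))` of a graph, over `ℂ`. -/
noncomputable def graphPermPoly {n : ℕ} (G : SimpleGraph (Fin n)) : Polynomial ℂ :=
  letI := Classical.decRel G.Adj
  permPoly (G.adjMatrix ℂ)

/-- The permanental energy `E_per(G)`: the sum of the moduli of the roots (with
multiplicity) of the permanental polynomial of `G`. -/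
noncomputable def perEnergy {n : ℕ} (G : SimpleGraph (Fin n)) : ℝ :=
  ((graphPermPoly G).roots.map (fun z : ℂ => ‖z‖)).sum

theorem RingHom.map_permanent {ι R S : Type*} [Fintype ι] [DecidableEq ι] [CommSemiring R]
    [CommSemiring S] (f : R →+* S) (M : Matrix ι ι R) :
    f M.permanent = (f.mapMatrix M).permanent := by
  simp [permanent, map_sum, map_prod]

namespace Matrix

variable {ι R : Type*} [Fintype ι] [DecidableEq ι] [CommRing R] (M : Matrix ι ι R)

theorem permanent_neg : (-M).permanent = (-1) ^ Fintype.card ι * M.permanent := by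
  rw [← permanent_smul, neg_one_smul]

theorem permanent_charmatrix_sub_prod_degree_lt :
    ((charmatrix M).permanent - ∏ i, (X - C (M i i))).degree < Fintype.card ι := by
  rw [permanent, ← Finset.insert_erase (Finset.mem_univ (Equiv.refl ι)),
    Finset.sum_insert (Finset.notMem_erase _ _)]
  simp only [Equiv.coe_refl, id, charmatrix_apply_eq, add_sub_cancel_left]
  rw [← mem_degreeLT]
  refine Submodule.sum_mem _ fun σ hσ => ?_
  rw [mem_degreeLT]
  refine degree_le_natDegree.trans_lt (Nat.cast_lt.mpr ?_)
  have hfix := Equiv.Perm.fixed_point_card_lt_of_ne_one (Finset.ne_of_mem_erase hσ)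
  calc (∏ i, charmatrix M (σ i) i).natDegree
      ≤ ∑ i, (charmatrix M (σ i) i).natDegree := natDegree_prod_le _ _
    _ ≤ ∑ i, if σ i = i then 1 else 0 :=
        Finset.sum_le_sum fun i _ => charmatrix_apply_natDegree_le _ _
    _ < Fintype.card ι := by rw [Finset.sum_boole, Nat.cast_id]; omega

theorem degree_permanent_charmatrix_sub_prod_lt_degree_prod [Nontrivial R] :
    ((charmatrix M).permanent - ∏ i, (X - C (M i i))).degree <
      (∏ i, (X - C (M i i))).degree := by
  rw [degree_eq_natDegree (monic_prod_X_sub_C _ _).ne_zero, natDegree_finsetProd_X_sub_C_eq_card,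
    Finset.card_univ]
  exact permanent_charmatrix_sub_prod_degree_lt M

theorem permanent_charmatrix_monic : (charmatrix M).permanent.Monic := by
  nontriviality R
  rw [← add_sub_cancel (∏ i, (X - C (M i i))) (charmatrix M).permanent]
  exact (monic_prod_X_sub_C _ _).add_of_left
    (degree_permanent_charmatrix_sub_prod_lt_degree_prod M)

theorem natDegree_permanent_charmatrix [Nontrivial R] :
    (charmatrix M).permanent.natDegree = Fintype.card ι := by
  rw [← add_sub_cancel (∏ i, (X - C (M i i))) (charmatrix M).permanent,
    natDegree_add_eq_left_of_degree_lt (degree_permanent_charmatrix_sub_prod_lt_degree_prod M),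
    natDegree_finsetProd_X_sub_C_eq_card, Finset.card_univ]

theorem coeff_zero_permanent_charmatrix :
    (charmatrix M).permanent.coeff 0 = (-1) ^ Fintype.card ι * M.permanent := by
  have : (evalRingHom 0).mapMatrix (charmatrix M) = -M := by
    ext i j
    by_cases h : i = j
    · subst h; simp
    · simp [h]
  rw [coeff_zero_eq_eval_zero, ← coe_evalRingHom, RingHom.map_permanent, this, permanent_neg]

end Matrix

theorem SimpleGraph.permanent_adjMatrix_top {V R : Type*} [Fintype V] [DecidableEq V]
    [CommSemiring R] [DecidableRel (⊤ : SimpleGraph V).Adj] :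
    ((⊤ : SimpleGraph V).adjMatrix R).permanent = numDerangements (Fintype.card V) := by
  simp only [permanent, adjMatrix_apply, top_adj, ne_eq, Finset.prod_boole, Finset.mem_univ,
    true_implies, Finset.sum_boole]
  rw [← card_derangements_eq_numDerangements, Fintype.card_subtype]
  simp only [derangements, Set.mem_ofPred_eq, ne_eq]
  congr

theorem permPoly_eq_permanent_charmatrix {n : ℕ} {R : Type*} [CommRing R]
    (A : Matrix (Fin n) (Fin n) R) : permPoly A = (charmatrix A).permanent := by
  rw [permPoly]
  congr 1
  ext i j
  by_cases h : i = j
  · subst h; simp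
  · simp [h]

theorem graphPermPoly_eq_permanent_charmatrix {n : ℕ} (G : SimpleGraph (Fin n))
    [DecidableRel G.Adj] : graphPermPoly G = (charmatrix (G.adjMatrix ℂ)).permanent := by
  rw [graphPermPoly, permPoly_eq_permanent_charmatrix]
  congr

theorem Real.multiset_card_mul_prod_rpow_inv_le_sum (s : Multiset ℝ) (hs : ∀ x ∈ s, 0 ≤ x) :
    (Multiset.card s : ℝ) * s.prod ^ (Multiset.card s : ℝ)⁻¹ ≤ s.sum := by
  classical
  rcases eq_or_ne s 0 with rfl | hs0
  · simp
  have hcard : (0 : ℝ) < Multiset.card s := by exact_mod_cast Multiset.card_pos.mpr hs0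
  have amgm := Real.geom_mean_le_arith_mean Finset.univ (fun _ => 1) (fun x : s => (x : ℝ))
    (fun _ _ => zero_le_one) (by simpa using hcard) (fun x _ => hs x (Multiset.coe_mem))
  simp only [Real.rpow_one, one_mul, Finset.sum_const, Finset.card_univ, Multiset.card_coe,
    nsmul_eq_mul, mul_one, le_div_iff₀ hcard] at amgm
  rw [Multiset.prod_eq_prod_coe, Multiset.sum_eq_sum_coe]
  linarith

theorem Polynomial.Monic.prod_map_norm_roots {K : Type*} [NormedField K] [IsAlgClosed K]
    {p : K[X]} (hp : p.Monic) : (p.roots.map (‖·‖)).prod = ‖p.coeff 0‖ := by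
  rw [(IsAlgClosed.splits p).coeff_zero_eq_prod_roots_of_monic hp, norm_mul, norm_pow, norm_neg,
    norm_one, one_pow, one_mul, ← normHom_apply, map_multiset_prod]
  rfl

theorem Polynomial.Monic.natDegree_mul_norm_coeff_zero_rpow_le_sum_norm_roots {K : Type*}
    [NormedField K] [IsAlgClosed K] {p : K[X]} (hp : p.Monic) :
    (p.natDegree : ℝ) * ‖p.coeff 0‖ ^ (p.natDegree : ℝ)⁻¹ ≤ (p.roots.map (‖·‖)).sum := by
  have amgm := Real.multiset_card_mul_prod_rpow_inv_le_sum (p.roots.map (‖·‖))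
    (Multiset.forall_mem_map_iff.mpr fun z _ => norm_nonneg z)
  rwa [Multiset.card_map, IsAlgClosed.card_roots_eq_natDegree, hp.prod_map_norm_roots] at amgm

theorem perEnergy_top_ge_general {n : ℕ} :
    perEnergy (⊤ : SimpleGraph (Fin n)) ≥
      (n : ℝ) * (numDerangements n : ℝ) ^ ((n : ℝ)⁻¹) := by
  have hpoly := graphPermPoly_eq_permanent_charmatrix (⊤ : SimpleGraph (Fin n))
  have hmonic : (graphPermPoly (⊤ : SimpleGraph (Fin n))).Monic :=
    hpoly ▸ permanent_charmatrix_monic _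
  have hdeg : (graphPermPoly (⊤ : SimpleGraph (Fin n))).natDegree = n := by
    rw [hpoly, natDegree_permanent_charmatrix, Fintype.card_fin]
  have hcoeff : ‖(graphPermPoly (⊤ : SimpleGraph (Fin n))).coeff 0‖ = numDerangements n := by
    rw [hpoly, coeff_zero_permanent_charmatrix, SimpleGraph.permanent_adjMatrix_top]
    simp
  simpa [perEnergy, hdeg, hcoeff] using
    hmonic.natDegree_mul_norm_coeff_zero_rpow_le_sum_norm_roots

/-- For every `n ≥ 1`, `E_per(K_n) ≥ n·D_n^{1/n}`, where `D_n` is the number of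
derangements of `{1, …, n}`. -/
theorem perEnergy_top_ge {n : ℕ} (hn : 1 ≤ n) :
    perEnergy (⊤ : SimpleGraph (Fin n)) ≥
      (n : ℝ) * (numDerangements n : ℝ) ^ ((n : ℝ)⁻¹) :=
  perEnergy_top_ge_general
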